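/- For all i ≥ 0 and s, t ≥ 0 with s ≥ 2: the word (ba)^i · bbaa · b^s(ab)^t(ba)^t b^s rewrites under ⇒* to (ab)^{i+2}, and (ba)^{i+2} = ((ab)^{i+2})^R is reachable from (ab)^{i+2} by →*; hence its doubled circular word satisfies the crossing condition. -/

import Mathlib

/-- The four-letter alphabet `{a, b, ā, b̄}`; `A` stands for `ā` and `B` for `b̄`. -/
inductive L : Type
  | a | b | A | B
deriving DecidableEq

/-- The antiparallel letter: `a ↔ ā`, `b ↔ b̄`. -/
def bar : L → L
  | .a => .A
  | .A => .a
  | .b => .B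
  | .B => .b

/-- Letterwise application of the involution `a ↔ ā`, `b ↔ b̄` to a word. -/
def barw (w : List L) : List L := w.map bar

/-- The eight rewrite rules of the Sub Rosa system:
`ab→ba`, `bā→āb`, `āb̄→b̄ā`, `b̄a→ab̄`, `aā→ε`, `āa→ε`, `bb̄→ε`, `b̄b→ε`. -/
def Rule : List L → List L → Prop := fun x y =>
  (x = [.a, .b] ∧ y = [.b, .a]) ∨ (x = [.b, .A] ∧ y = [.A, .b]) ∨
  (x = [.A, .B] ∧ y = [.B, .A]) ∨ (x = [.B, .a] ∧ y = [.a, .B]) ∨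
  (x = [.a, .A] ∧ y = []) ∨ (x = [.A, .a] ∧ y = []) ∨
  (x = [.b, .B] ∧ y = []) ∨ (x = [.B, .b] ∧ y = [])

/-- One rewrite step: replace a factor matching the left side of a rule by its right side. -/
def Step (u v : List L) : Prop :=
  ∃ p s x y, Rule x y ∧ u = p ++ x ++ s ∧ v = p ++ y ++ s

/-- `u →* v`: the reflexive transitive closure of the rewrite step. -/
def Steps : List L → List L → Prop := Relation.ReflTransGen Step

/-- `rep w n` is the `n`-fold concatenation `w^n`. -/
def rep (w : List L) (n : ℕ) : List L := (List.replicate n w).flatten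

/-- A matching on a word pairs each occurrence of a letter with an occurrence of its
antiparallel letter, bijectively (an involution without fixed points). -/
structure Matching (w : List L) where
  m : Fin w.length → Fin w.length
  invol : ∀ i, m (m i) = i
  nofix : ∀ i, m i ≠ i
  compat : ∀ i, w.get (m i) = bar (w.get i)

/-- The 4-tuples of letters that are cyclic rotations of `(a, b, ā, b̄)`. -/
def Rot4 : L → L → L → L → Prop := fun x y z t =>
  (x = .a ∧ y = .b ∧ z = .A ∧ t = .B) ∨ (x = .b ∧ y = .A ∧ z = .B ∧ t = .a) ∨
  (x = .A ∧ y = .B ∧ z = .a ∧ t = .b) ∨ (x = .B ∧ y = .a ∧ z = .b ∧ t = .A)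

/-- The crossing condition: whenever two matched pairs interleave (cross) in the cyclic
word, the four letters read in positional order form a cyclic rotation of `a, b, ā, b̄`. -/
def CrossOK {w : List L} (M : Matching w) : Prop :=
  ∀ i j i' j' : Fin w.length, i < j → j < i' → i' < j' →
    M.m i = i' → M.m j = j' →
    Rot4 (w.get i) (w.get j) (w.get i') (w.get j')

/-- A word admits a matching satisfying the crossing condition. -/
def GoodWord (w : List L) : Prop := ∃ M : Matching w, CrossOK M

/-- `u ⇒ v`: either a rewrite step, or the conjugation-with-flip `xy ⤳ y x̄`
(move a prefix to the end with all letters replaced by their antiparallels). -/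
def FStep (u v : List L) : Prop :=
  Step u v ∨ ∃ x y, u = x ++ y ∧ v = y ++ barw x

/-- `u ⇒* v`: the reflexive transitive closure of `⇒`. -/
def FSteps : List L → List L → Prop := Relation.ReflTransGen FStep

-- infrastructure
lemma rep_zero (w : List L) : rep w 0 = [] := rfl
lemma rep_succ (w : List L) (n : ℕ) : rep w (n+1) = w ++ rep w n := by
  simp [rep, List.replicate_succ]
lemma rep_add (w : List L) (m n : ℕ) : rep w (m+n) = rep w m ++ rep w n := by
  induction m with
  | zero => simp [rep_zero]
  | succ k ih => rw [Nat.succ_add, rep_succ, rep_succ, ih, List.append_assoc]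
lemma rep_succ' (w : List L) (n : ℕ) : rep w (n+1) = rep w n ++ w := by
  rw [show n + 1 = n + 1 from rfl, rep_add, rep_succ, rep_zero, List.append_nil]
lemma rep_len (w : List L) (n : ℕ) : (rep w n).length = n * w.length := by
  induction n with
  | zero => simp [rep_zero]
  | succ k ih => rw [rep_succ, List.length_append, ih]; ring
lemma rep_single (x : L) (n : ℕ) : rep [x] n = List.replicate n x := by
  induction n with
  | zero => rfl
  | succ k ih => rw [rep_succ, ih, List.replicate_succ]; rfl

lemma steps_refl (u : List L) : Steps u u := Relation.ReflTransGen.refl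
lemma steps_trans {u v w : List L} (h1 : Steps u v) (h2 : Steps v w) : Steps u w :=
  Relation.ReflTransGen.trans h1 h2
lemma step_ctx {u v : List L} (p q : List L) (h : Step u v) : Step (p ++ u ++ q) (p ++ v ++ q) := by
  obtain ⟨pp, ss, x, y, hr, h1, h2⟩ := h
  exact ⟨p ++ pp, ss ++ q, x, y, hr, by simp [h1], by simp [h2]⟩
lemma steps_ctx {u v : List L} (p q : List L) (h : Steps u v) : Steps (p ++ u ++ q) (p ++ v ++ q) := by
  induction h with
  | refl => exact Relation.ReflTransGen.refl
  | tail _ h2 ih => exact ih.tail (step_ctx p q h2)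
lemma fsteps_of_steps {u v : List L} (h : Steps u v) : FSteps u v :=
  Relation.ReflTransGen.mono (fun _ _ h => Or.inl h) _ _ h
lemma fsteps_trans {u v w : List L} (h1 : FSteps u v) (h2 : FSteps v w) : FSteps u w :=
  Relation.ReflTransGen.trans h1 h2

lemma step_ab (p q : List L) : Step (p ++ [L.a, L.b] ++ q) (p ++ [L.b, L.a] ++ q) :=
  ⟨p, q, _, _, Or.inl ⟨rfl, rfl⟩, rfl, rfl⟩

def wA (n : ℕ) : List L := rep [L.a] n
def wB (n : ℕ) : List L := rep [L.b] n
def wAB (n : ℕ) : List L := rep [L.a, L.b] n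
def wBA (n : ℕ) : List L := rep [L.b, L.a] n

lemma steps_of_eq {u v : List L} (h : u = v) : Steps u v := by rw [h]; exact Relation.ReflTransGen.refl
lemma fsteps_of_eq {u v : List L} (h : u = v) : FSteps u v := by rw [h]; exact Relation.ReflTransGen.refl

lemma SB (Z : List L) : FSteps ([L.b] ++ Z ++ [L.b]) Z := by
  refine Relation.ReflTransGen.head (Or.inr ⟨[L.b], Z ++ [L.b], by simp, rfl⟩) ?_
  refine Relation.ReflTransGen.single (Or.inl ?_)
  exact ⟨Z, [], [L.b, L.B], [], by unfold Rule; tauto, by simp [barw, bar], by simp⟩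

lemma SA (Z : List L) : FSteps ([L.a] ++ Z ++ [L.a]) Z := by
  refine Relation.ReflTransGen.head (Or.inr ⟨[L.a], Z ++ [L.a], by simp, rfl⟩) ?_
  refine Relation.ReflTransGen.single (Or.inl ?_)
  exact ⟨Z, [], [L.a, L.A], [], by unfold Rule; tauto, by simp [barw, bar], by simp⟩

lemma M1 (m : ℕ) : Steps ([L.a] ++ wB m) (wB m ++ [L.a]) := by
  induction m with
  | zero => exact steps_of_eq (by simp [wB, rep_zero])
  | succ k ih =>
    refine steps_trans (steps_of_eq (show [L.a] ++ wB (k+1) = [] ++ [L.a, L.b] ++ wB k by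
      simp [wB, rep_succ])) ?_
    refine Relation.ReflTransGen.head (step_ab [] (wB k)) ?_
    refine steps_trans (steps_of_eq (show ([] : List L) ++ [L.b, L.a] ++ wB k
      = [L.b] ++ ([L.a] ++ wB k) ++ [] by simp)) ?_
    refine steps_trans (steps_ctx [L.b] [] ih) ?_
    exact steps_of_eq (by simp [wB, rep_succ])

lemma M2 (k : ℕ) : Steps (wA k ++ [L.b]) ([L.b] ++ wA k) := by
  induction k with
  | zero => exact steps_of_eq (by simp [wA, rep_zero])
  | succ k ih =>
    refine steps_trans (steps_of_eq (show wA (k+1) ++ [L.b] = [L.a] ++ (wA k ++ [L.b]) ++ [] by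
      simp [wA, rep_succ])) ?_
    refine steps_trans (steps_ctx [L.a] [] ih) ?_
    refine steps_trans (steps_of_eq (show [L.a] ++ ([L.b] ++ wA k) ++ []
      = [] ++ [L.a, L.b] ++ wA k by simp)) ?_
    refine Relation.ReflTransGen.head (step_ab [] (wA k)) ?_
    exact steps_of_eq (by simp [wA, rep_succ])

/-- sort `a^n b^n Z` to `(ab)^n Z` -/
lemma Gs (n : ℕ) (Z : List L) : Steps (wA n ++ wB n ++ Z) (wAB n ++ Z) := by
  induction n generalizing Z with
  | zero => exact steps_of_eq (by simp [wA, wB, wAB, rep_zero])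
  | succ k ih =>
    refine steps_trans (steps_of_eq (show wA (k+1) ++ wB (k+1) ++ Z
      = [L.a] ++ (wA k ++ [L.b]) ++ (wB k ++ Z) by
        simp [wA, wB, rep_succ, rep_succ', List.append_assoc])) ?_
    refine steps_trans (steps_ctx [L.a] (wB k ++ Z) (M2 k)) ?_
    refine steps_trans (steps_of_eq (show [L.a] ++ ([L.b] ++ wA k) ++ (wB k ++ Z)
      = [L.a, L.b] ++ (wA k ++ wB k ++ Z) ++ [] by simp)) ?_
    refine steps_trans (steps_ctx [L.a, L.b] [] (ih Z)) ?_
    exact steps_of_eq (by simp [wAB, rep_succ])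

/-- extract: `a^{k+1} b R →* ab a^k R` -/
lemma EXT (k : ℕ) (R : List L) : Steps (wA (k+1) ++ [L.b] ++ R) ([L.a, L.b] ++ wA k ++ R) := by
  refine steps_trans (steps_of_eq (show wA (k+1) ++ [L.b] ++ R
    = [L.a] ++ (wA k ++ [L.b]) ++ R by simp [wA, rep_succ, List.append_assoc])) ?_
  refine steps_trans (steps_ctx [L.a] R (M2 k)) ?_
  exact steps_of_eq (by simp)

/-- bubble front `b` over `a^k` and strip it with a trailing `b` -/
lemma LEstrip (k m : ℕ) (R : List L) :
    FSteps (wA k ++ [L.b] ++ R ++ wB (m+1)) (wA k ++ R ++ wB m) := by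
  refine fsteps_trans (fsteps_of_steps (steps_trans
    (steps_of_eq (show wA k ++ [L.b] ++ R ++ wB (m+1)
      = [] ++ (wA k ++ [L.b]) ++ (R ++ wB (m+1)) by simp))
    (steps_ctx [] (R ++ wB (m+1)) (M2 k)))) ?_
  refine fsteps_trans (fsteps_of_eq (show ([] : List L) ++ ([L.b] ++ wA k) ++ (R ++ wB (m+1))
    = [L.b] ++ (wA k ++ R ++ wB m) ++ [L.b] by
      simp [wB, rep_succ', List.append_assoc])) ?_
  exact SB _

def WD (s i t1 t2 : ℕ) : List L :=
  wBA i ++ [L.b, L.b, L.a, L.a] ++ wB s ++ wAB t1 ++ wBA t2 ++ wB s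

/-- the sorting lemma `a^s (ba)^j bbaa b^s (ab)^t →* (ab)^{s+j+2+t}` (here `s = u+2`). -/
lemma Hlem (u t : ℕ) : ∀ j, Steps (wA (u+2) ++ wBA j ++ [L.b,L.b,L.a,L.a] ++ wB (u+2) ++ wAB t)
    (wAB (u+j+4+t)) := by
  intro j
  induction j with
  | zero =>
    refine steps_trans (steps_of_eq (show
      wA (u+2) ++ wBA 0 ++ [L.b,L.b,L.a,L.a] ++ wB (u+2) ++ wAB t
      = wA (u+1+1) ++ [L.b] ++ ([L.b,L.a,L.a] ++ wB (u+2) ++ wAB t) by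
        simp [wBA, rep_zero, List.append_assoc])) ?_
    refine steps_trans (EXT (u+1) _) ?_
    refine steps_trans (steps_of_eq (show
      [L.a,L.b] ++ wA (u+1) ++ ([L.b,L.a,L.a] ++ wB (u+2) ++ wAB t)
      = [L.a,L.b] ++ (wA (u+1) ++ [L.b] ++ ([L.a,L.a] ++ wB (u+2) ++ wAB t)) ++ [] by
        simp [List.append_assoc])) ?_
    refine steps_trans (steps_ctx [L.a,L.b] [] (steps_trans (EXT u _) (steps_of_eq (show
      [L.a,L.b] ++ wA u ++ ([L.a,L.a] ++ wB (u+2) ++ wAB t)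
      = [L.a,L.b] ++ (wA (u+2) ++ wB (u+2) ++ wAB t) ++ [] by
        have : wA u ++ [L.a, L.a] = wA (u+2) := by
          unfold wA
          rw [show u+2 = (u+1)+1 from rfl, rep_succ', rep_succ']
          simp
        rw [← this]; simp [List.append_assoc])))) ?_
    refine steps_trans (steps_ctx [L.a,L.b] [] (steps_ctx [L.a,L.b] [] (Gs (u+2) (wAB t)))) ?_
    refine steps_of_eq ?_
    rw [show u+0+4+t = ((u+2+t)+1)+1 from by ring]
    simp [wAB, rep_succ, rep_add, List.append_assoc]
  | succ j ih =>
    refine steps_trans (steps_of_eq (show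
      wA (u+2) ++ wBA (j+1) ++ [L.b,L.b,L.a,L.a] ++ wB (u+2) ++ wAB t
      = wA (u+1+1) ++ [L.b] ++ ([L.a] ++ (wBA j ++ [L.b,L.b,L.a,L.a] ++ wB (u+2) ++ wAB t)) by
        simp [wBA, rep_succ, List.append_assoc])) ?_
    refine steps_trans (EXT (u+1) _) ?_
    refine steps_trans (steps_of_eq (show
      [L.a,L.b] ++ wA (u+1) ++ ([L.a] ++ (wBA j ++ [L.b,L.b,L.a,L.a] ++ wB (u+2) ++ wAB t))
      = [L.a,L.b] ++ (wA (u+2) ++ wBA j ++ [L.b,L.b,L.a,L.a] ++ wB (u+2) ++ wAB t) ++ [] by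
        have : wA (u+1) ++ [L.a] = wA (u+2) := by unfold wA; rw [rep_succ' [L.a] (u+1)]
        rw [← this]; simp [List.append_assoc])) ?_
    refine steps_trans (steps_ctx [L.a,L.b] [] ih) ?_
    refine steps_of_eq ?_
    rw [show u+(j+1)+4+t = (u+j+4+t)+1 from by ring]
    simp [wAB, rep_succ]

lemma QL (K t : ℕ) : ∀ m, FSteps (wA K ++ wB (K+m) ++ wAB t ++ wB m) (wAB (K+t)) := by
  intro m
  induction m with
  | zero =>
    refine fsteps_trans (fsteps_of_eq (show wA K ++ wB (K+0) ++ wAB t ++ wB 0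
      = wA K ++ wB K ++ wAB t by simp [wB, rep_zero])) ?_
    refine fsteps_trans (fsteps_of_steps (steps_trans (steps_of_eq (show
      wA K ++ wB K ++ wAB t = wA K ++ wB K ++ wAB t from rfl)) (Gs K (wAB t)))) ?_
    exact fsteps_of_eq (by unfold wAB; rw [rep_add])
  | succ m ih =>
    refine fsteps_trans (fsteps_of_eq (show wA K ++ wB (K+(m+1)) ++ wAB t ++ wB (m+1)
      = wA K ++ [L.b] ++ (wB (K+m) ++ wAB t) ++ wB (m+1) by
        simp only [wB]
        rw [show K+(m+1) = K+m+1 from rfl, rep_succ [L.b] (K+m)]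
        simp [List.append_assoc])) ?_
    refine fsteps_trans (LEstrip K m _) ?_
    refine fsteps_trans (fsteps_of_eq (by simp [List.append_assoc])) ih

lemma PB (t : ℕ) : ∀ m k j, 2 ≤ k + m →
    FSteps (wA k ++ wBA j ++ [L.b,L.b,L.a,L.a] ++ wB (k+m) ++ wAB t ++ wB m)
      (wAB (k+j+2+t)) := by
  intro m
  induction m with
  | zero =>
    intro k j h2
    obtain ⟨u, rfl⟩ : ∃ u, k = u + 2 := ⟨k - 2, by omega⟩
    refine fsteps_trans (fsteps_of_eq (show
      wA (u+2) ++ wBA j ++ [L.b,L.b,L.a,L.a] ++ wB (u+2+0) ++ wAB t ++ wB 0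
      = wA (u+2) ++ wBA j ++ [L.b,L.b,L.a,L.a] ++ wB (u+2) ++ wAB t by
        simp [wB, rep_zero])) ?_
    refine fsteps_trans (fsteps_of_steps (Hlem u t j)) ?_
    exact fsteps_of_eq (by rw [show u+j+4+t = u+2+j+2+t from by ring])
  | succ m ih =>
    intro k j h2
    cases j with
    | succ j' =>
      refine fsteps_trans (fsteps_of_eq (show
        wA k ++ wBA (j'+1) ++ [L.b,L.b,L.a,L.a] ++ wB (k+(m+1)) ++ wAB t ++ wB (m+1)
        = wA k ++ [L.b] ++ ([L.a] ++ (wBA j' ++ [L.b,L.b,L.a,L.a] ++ wB (k+m+1) ++ wAB t))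
            ++ wB (m+1) by
          rw [show k+(m+1) = k+m+1 from rfl]
          simp only [wBA]
          rw [rep_succ [L.b, L.a] j']
          simp [List.append_assoc])) ?_
      refine fsteps_trans (LEstrip k m _) ?_
      refine fsteps_trans (fsteps_of_eq (show
        wA k ++ ([L.a] ++ (wBA j' ++ [L.b,L.b,L.a,L.a] ++ wB (k+m+1) ++ wAB t)) ++ wB m
        = wA (k+1) ++ wBA j' ++ [L.b,L.b,L.a,L.a] ++ wB ((k+1)+m) ++ wAB t ++ wB m by
          have e : wA k ++ [L.a] = wA (k+1) := by unfold wA; rw [rep_succ' [L.a] k]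
          rw [← e, show k+1+m = k+m+1 from by ring]
          simp [List.append_assoc])) ?_
      refine fsteps_trans (ih (k+1) j' (by omega)) ?_
      exact fsteps_of_eq (by rw [show k+1+j'+2+t = k+(j'+1)+2+t from by ring])
    | zero =>
      refine fsteps_trans (fsteps_of_eq (show
        wA k ++ wBA 0 ++ [L.b,L.b,L.a,L.a] ++ wB (k+(m+1)) ++ wAB t ++ wB (m+1)
        = wA k ++ [L.b] ++ ([L.b,L.a,L.a] ++ wB (k+m+1) ++ wAB t) ++ wB (m+1) by
          rw [show k+(m+1) = k+m+1 from rfl]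
          simp [wBA, rep_zero, List.append_assoc])) ?_
      refine fsteps_trans (LEstrip k m _) ?_
      cases m with
      | zero =>
        obtain ⟨v, rfl⟩ : ∃ v, k = v + 1 := ⟨k - 1, by omega⟩
        refine fsteps_trans (fsteps_of_eq (show
          wA (v+1) ++ ([L.b,L.a,L.a] ++ wB (v+1+0+1) ++ wAB t) ++ wB 0
          = wA (v+1) ++ [L.b] ++ ([L.a,L.a] ++ wB (v+2) ++ wAB t) by
            rw [show v+1+0+1 = v+2 from by ring]
            simp [wB, rep_zero, List.append_assoc])) ?_
        refine fsteps_trans (fsteps_of_steps (EXT v _)) ?_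
        refine fsteps_trans (fsteps_of_eq (show
          [L.a,L.b] ++ wA v ++ ([L.a,L.a] ++ wB (v+2) ++ wAB t)
          = [L.a,L.b] ++ (wA v ++ ([L.a,L.a] ++ wB (v+2) ++ wAB t)) ++ [] by
            simp [List.append_assoc])) ?_
        refine fsteps_trans (fsteps_of_steps (steps_ctx [L.a,L.b] [] (steps_trans
            (steps_of_eq (show wA v ++ ([L.a,L.a] ++ wB (v+2) ++ wAB t)
              = wA (v+2) ++ wB (v+2) ++ wAB t by
                have : wA v ++ [L.a, L.a] = wA (v+2) := by
                  unfold wA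
                  rw [show v+2 = (v+1)+1 from rfl, rep_succ', rep_succ']
                  simp
                rw [← this]; simp [List.append_assoc]))
            (Gs (v+2) (wAB t))))) ?_
        refine fsteps_of_eq ?_
        rw [show v+1+0+2+t = (v+2+t)+1 from by ring]
        simp only [wAB]
        rw [rep_succ [L.a,L.b] (v+2+t), rep_add]
        simp
        rw [show v+2+t = v+(2+t) from by ring, rep_add [L.a,L.b] v, rep_add [L.a,L.b] 2]
      | succ m' =>
        refine fsteps_trans (fsteps_of_eq (show
          wA k ++ ([L.b,L.a,L.a] ++ wB (k+(m'+1)+1) ++ wAB t) ++ wB (m'+1)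
          = wA k ++ [L.b] ++ ([L.a,L.a] ++ wB (k+m'+2) ++ wAB t) ++ wB (m'+1) by
            rw [show k+(m'+1)+1 = k+m'+2 from by ring]
            simp [List.append_assoc])) ?_
        refine fsteps_trans (LEstrip k m' _) ?_
        refine fsteps_trans (fsteps_of_eq (show
          wA k ++ ([L.a,L.a] ++ wB (k+m'+2) ++ wAB t) ++ wB m'
          = wA (k+2) ++ wB ((k+2)+m') ++ wAB t ++ wB m' by
            have : wA k ++ [L.a, L.a] = wA (k+2) := by
              unfold wA
              rw [show k+2 = (k+1)+1 from rfl, rep_succ', rep_succ']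
              simp
            rw [← this, show k+2+m' = k+m'+2 from by ring]
            simp [List.append_assoc])) ?_
        refine fsteps_trans (QL (k+2) t m') ?_
        exact fsteps_of_eq (by rw [show k+2+t = k+0+2+t from by ring])

lemma LAstep (σ i t1 t2 : ℕ) :
    FSteps (WD (σ+1) (i+1) t1 (t2+1)) (WD (σ+1) i t1 t2) := by
  refine fsteps_trans (fsteps_of_eq (show WD (σ+1) (i+1) t1 (t2+1)
    = [L.b] ++ ([L.a] ++ wBA i ++ [L.b,L.b,L.a,L.a] ++ wB (σ+1) ++ wAB t1
        ++ wBA (t2+1) ++ wB σ) ++ [L.b] by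
      unfold WD
      simp only [wBA, wB]
      rw [rep_succ [L.b,L.a] i, rep_succ' [L.b] σ]
      simp [List.append_assoc])) ?_
  refine fsteps_trans (SB _) ?_
  refine fsteps_trans (fsteps_of_steps (steps_trans (steps_of_eq (show
    [L.a] ++ wBA i ++ [L.b,L.b,L.a,L.a] ++ wB (σ+1) ++ wAB t1 ++ wBA (t2+1) ++ wB σ
    = ([L.a] ++ wBA i ++ [L.b,L.b,L.a,L.a] ++ wB (σ+1) ++ wAB t1 ++ wBA t2 ++ [L.b])
        ++ ([L.a] ++ wB σ) ++ [] by
      simp only [wBA]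
      rw [rep_succ' [L.b,L.a] t2]
      simp [List.append_assoc]))
    (steps_ctx _ [] (M1 σ)))) ?_
  refine fsteps_trans (fsteps_of_eq (show
    ([L.a] ++ wBA i ++ [L.b,L.b,L.a,L.a] ++ wB (σ+1) ++ wAB t1 ++ wBA t2 ++ [L.b])
        ++ (wB σ ++ [L.a]) ++ []
    = [L.a] ++ (wBA i ++ [L.b,L.b,L.a,L.a] ++ wB (σ+1) ++ wAB t1 ++ wBA t2 ++ wB (σ+1))
        ++ [L.a] by
      simp only [wB]
      rw [rep_succ [L.b] σ]
      simp [List.append_assoc])) ?_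
  refine fsteps_trans (SA _) ?_
  exact fsteps_of_eq (by unfold WD; simp [List.append_assoc])

lemma LAiter (σ t1 : ℕ) : ∀ k i t2, FSteps (WD (σ+1) (i+k) t1 (t2+k)) (WD (σ+1) i t1 t2) := by
  intro k
  induction k with
  | zero => intro i t2; exact fsteps_of_eq rfl
  | succ k ih =>
    intro i t2
    refine fsteps_trans (fsteps_of_eq (show WD (σ+1) (i+(k+1)) t1 (t2+(k+1))
      = WD (σ+1) ((i+k)+1) t1 ((t2+k)+1) from rfl)) ?_
    exact fsteps_trans (LAstep σ (i+k) t1 (t2+k)) (ih i t2)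

lemma VS (R : List L) : ∀ c, FSteps (wB c ++ R ++ wB c) R := by
  intro c
  induction c with
  | zero => exact fsteps_of_eq (by simp [wB, rep_zero])
  | succ c ih =>
    refine fsteps_trans (fsteps_of_eq (show wB (c+1) ++ R ++ wB (c+1)
      = [L.b] ++ (wB c ++ R ++ wB c) ++ [L.b] by
        have e1 : wB (c+1) = [L.b] ++ wB c := by simp only [wB]; rw [rep_succ]
        have e2 : wB (c+1) = wB c ++ [L.b] := by simp only [wB]; rw [rep_succ']
        nth_rewrite 1 [e1]
        rw [e2]
        simp [List.append_assoc])) ?_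
    exact fsteps_trans (SB _) ih

lemma DL (m : ℕ) : ∀ d, FSteps (wAB (m+d) ++ wBA d) (wAB m) := by
  intro d
  induction d with
  | zero => exact fsteps_of_eq (by simp [wBA, rep_zero])
  | succ d ih =>
    refine fsteps_trans (fsteps_of_eq (show wAB (m+(d+1)) ++ wBA (d+1)
      = [L.a] ++ ([L.b] ++ (wAB (m+d) ++ wBA d) ++ [L.b]) ++ [L.a] by
        simp only [wAB, wBA]
        rw [show m+(d+1) = (m+d)+1 from rfl, rep_succ [L.a,L.b] (m+d), rep_succ' [L.b,L.a] d]
        simp [List.append_assoc])) ?_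
    refine fsteps_trans (SA _) ?_
    exact fsteps_trans (SB _) ih

lemma RL (t : ℕ) : ∀ c, FSteps ([L.a] ++ wB (c+1) ++ wAB t ++ wB c) (wAB (t+1)) := by
  intro c
  induction c with
  | zero =>
    refine fsteps_of_eq ?_
    simp only [wB, wAB]
    rw [rep_succ [L.b] 0, rep_zero, rep_succ [L.a,L.b] t]
    simp
  | succ c ih =>
    refine fsteps_trans (fsteps_of_eq (show [L.a] ++ wB (c+2) ++ wAB t ++ wB (c+1)
      = wA 1 ++ [L.b] ++ (wB (c+1) ++ wAB t) ++ wB (c+1) by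
        have e : wA 1 = [L.a] := by simp [wA, rep_succ, rep_zero]
        rw [e]
        simp only [wB]
        rw [show c+2 = (c+1)+1 from rfl, rep_succ [L.b] (c+1)]
        simp [List.append_assoc])) ?_
    refine fsteps_trans (LEstrip 1 c _) ?_
    refine fsteps_trans (fsteps_of_eq (show wA 1 ++ (wB (c+1) ++ wAB t) ++ wB c
      = [L.a] ++ wB (c+1) ++ wAB t ++ wB c by
        have e : wA 1 = [L.a] := by simp [wA, rep_succ, rep_zero]
        rw [e]; simp [List.append_assoc])) ?_
    exact ih

lemma G2lem (σ t : ℕ) :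
    FSteps (WD (σ+2) 0 t 1) (wAB (t+1)) := by
  refine fsteps_trans (fsteps_of_eq (show WD (σ+2) 0 t 1
    = [L.b] ++ ([L.b,L.a,L.a] ++ wB (σ+2) ++ wAB t ++ wBA 1 ++ wB (σ+1)) ++ [L.b] by
      unfold WD
      simp only [wBA, wB]
      rw [rep_zero, rep_succ' [L.b] (σ+1)]
      simp [List.append_assoc])) ?_
  refine fsteps_trans (SB _) ?_
  refine fsteps_trans (fsteps_of_eq (show
    [L.b,L.a,L.a] ++ wB (σ+2) ++ wAB t ++ wBA 1 ++ wB (σ+1)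
    = [L.b] ++ ([L.a,L.a] ++ wB (σ+2) ++ wAB t ++ wBA 1 ++ wB σ) ++ [L.b] by
      simp only [wB]
      rw [rep_succ' [L.b] σ]
      simp [List.append_assoc])) ?_
  refine fsteps_trans (SB _) ?_
  refine fsteps_trans (fsteps_of_steps (steps_trans (steps_of_eq (show
    [L.a,L.a] ++ wB (σ+2) ++ wAB t ++ wBA 1 ++ wB σ
    = ([L.a,L.a] ++ wB (σ+2) ++ wAB t ++ [L.b]) ++ ([L.a] ++ wB σ) ++ [] by
      simp only [wBA]
      rw [rep_succ [L.b,L.a] 0, rep_zero]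
      simp [List.append_assoc]))
    (steps_ctx _ [] (M1 σ)))) ?_
  refine fsteps_trans (fsteps_of_eq (show
    ([L.a,L.a] ++ wB (σ+2) ++ wAB t ++ [L.b]) ++ (wB σ ++ [L.a]) ++ []
    = [L.a] ++ ([L.a] ++ wB (σ+2) ++ wAB t ++ wB (σ+1)) ++ [L.a] by
      simp only [wB]
      rw [rep_succ [L.b] σ]
      simp [List.append_assoc])) ?_
  refine fsteps_trans (SA _) ?_
  refine fsteps_trans (fsteps_of_eq (show
    [L.a] ++ wB (σ+2) ++ wAB t ++ wB (σ+1)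
    = [L.a] ++ wB ((σ+1)+1) ++ wAB t ++ wB (σ+1) from rfl)) ?_
  exact RL t (σ+1)

lemma G1lem (σ dp mm t : ℕ) (ht : t = mm + dp) :
    FSteps (WD (σ+2) 0 t (dp+2)) (wAB mm) := by
  subst ht
  refine fsteps_trans (fsteps_of_eq (show WD (σ+2) 0 (mm+dp) (dp+2)
    = [L.b] ++ ([L.b,L.a,L.a] ++ wB (σ+2) ++ wAB (mm+dp) ++ wBA (dp+2) ++ wB (σ+1)) ++ [L.b] by
      unfold WD
      simp only [wBA, wB]
      rw [rep_zero, rep_succ' [L.b] (σ+1)]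
      simp [List.append_assoc])) ?_
  refine fsteps_trans (SB _) ?_
  refine fsteps_trans (fsteps_of_eq (show
    [L.b,L.a,L.a] ++ wB (σ+2) ++ wAB (mm+dp) ++ wBA (dp+2) ++ wB (σ+1)
    = [L.b] ++ ([L.a,L.a] ++ wB (σ+2) ++ wAB (mm+dp) ++ wBA (dp+2) ++ wB σ) ++ [L.b] by
      simp only [wB]
      rw [rep_succ' [L.b] σ]
      simp [List.append_assoc])) ?_
  refine fsteps_trans (SB _) ?_
  refine fsteps_trans (fsteps_of_steps (steps_trans (steps_of_eq (show
    [L.a,L.a] ++ wB (σ+2) ++ wAB (mm+dp) ++ wBA (dp+2) ++ wB σ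
    = ([L.a,L.a] ++ wB (σ+2) ++ wAB (mm+dp) ++ wBA (dp+1) ++ [L.b]) ++ ([L.a] ++ wB σ) ++ [] by
      simp only [wBA]
      rw [show dp+2 = (dp+1)+1 from rfl, rep_succ' [L.b,L.a] (dp+1)]
      simp [List.append_assoc]))
    (steps_ctx _ [] (M1 σ)))) ?_
  refine fsteps_trans (fsteps_of_eq (show
    ([L.a,L.a] ++ wB (σ+2) ++ wAB (mm+dp) ++ wBA (dp+1) ++ [L.b]) ++ (wB σ ++ [L.a]) ++ []
    = [L.a] ++ ([L.a] ++ wB (σ+2) ++ wAB (mm+dp) ++ wBA (dp+1) ++ wB (σ+1)) ++ [L.a] by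
      simp only [wB]
      rw [rep_succ [L.b] σ]
      simp [List.append_assoc])) ?_
  refine fsteps_trans (SA _) ?_
  refine fsteps_trans (fsteps_of_steps (steps_trans (steps_of_eq (show
    [L.a] ++ wB (σ+2) ++ wAB (mm+dp) ++ wBA (dp+1) ++ wB (σ+1)
    = ([L.a] ++ wB (σ+2) ++ wAB (mm+dp) ++ wBA dp ++ [L.b]) ++ ([L.a] ++ wB (σ+1)) ++ [] by
      simp only [wBA]
      rw [rep_succ' [L.b,L.a] dp]
      simp [List.append_assoc]))
    (steps_ctx _ [] (M1 (σ+1))))) ?_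
  refine fsteps_trans (fsteps_of_eq (show
    ([L.a] ++ wB (σ+2) ++ wAB (mm+dp) ++ wBA dp ++ [L.b]) ++ (wB (σ+1) ++ [L.a]) ++ []
    = [L.a] ++ (wB (σ+2) ++ (wAB (mm+dp) ++ wBA dp) ++ wB (σ+2)) ++ [L.a] by
      simp only [wB]
      rw [rep_succ [L.b] (σ+1)]
      simp [List.append_assoc])) ?_
  refine fsteps_trans (SA _) ?_
  refine fsteps_trans (VS (wAB (mm+dp) ++ wBA dp) (σ+2)) ?_
  exact DL mm dp

lemma main1 (σ i t : ℕ) : FSteps (WD (σ+2) i t t) (wAB (i+2)) := by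
  rcases le_or_gt t i with hle | hlt
  · obtain ⟨j, rfl⟩ : ∃ j, i = j + t := ⟨i - t, by omega⟩
    refine fsteps_trans (fsteps_of_eq (show WD (σ+2) (j+t) t t
      = WD ((σ+1)+1) (j+t) t (0+t) by rw [Nat.zero_add])) ?_
    refine fsteps_trans (LAiter (σ+1) t t j 0) ?_
    refine fsteps_trans (fsteps_of_eq (show WD ((σ+1)+1) j t 0
      = wA 0 ++ wBA j ++ [L.b,L.b,L.a,L.a] ++ wB (0+(σ+2)) ++ wAB t ++ wB (σ+2) by
        unfold WD
        simp [wA, wBA, rep_zero, List.append_assoc])) ?_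
    refine fsteps_trans (PB t (σ+2) 0 j (by omega)) ?_
    exact fsteps_of_eq (by rw [show 0+j+2+t = j+t+2 from by ring])
  · obtain ⟨d, rfl⟩ : ∃ d, t = d + i := ⟨t - i, by omega⟩
    refine fsteps_trans (fsteps_of_eq (show WD (σ+2) i (d+i) (d+i)
      = WD ((σ+1)+1) (0+i) (d+i) (d+i) by rw [Nat.zero_add])) ?_
    refine fsteps_trans (LAiter (σ+1) (d+i) i 0 d) ?_
    rcases lt_or_ge d 2 with hd | hd
    · obtain rfl : d = 1 := by omega
      refine fsteps_trans (G2lem σ (1+i)) ?_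
      exact fsteps_of_eq (by rw [show 1+i+1 = i+2 from by ring])
    · obtain ⟨dp, rfl⟩ : ∃ dp, d = dp + 2 := ⟨d - 2, by omega⟩
      exact G1lem σ dp (i+2) (dp+2+i) (by ring)

/-- `(ab)^n →* (ba)^n` -/
lemma ABtoBA (n : ℕ) : Steps (wAB n) (wBA n) := by
  induction n with
  | zero => exact steps_of_eq rfl
  | succ n ih =>
    refine steps_trans (steps_of_eq (show wAB (n+1) = [] ++ [L.a,L.b] ++ wAB n by
      simp only [wAB]; rw [rep_succ [L.a,L.b] n]; simp)) ?_
    refine Relation.ReflTransGen.head (step_ab [] (wAB n)) ?_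
    refine steps_trans (steps_of_eq (show ([] : List L) ++ [L.b,L.a] ++ wAB n
      = [L.b,L.a] ++ wAB n ++ [] by simp)) ?_
    refine steps_trans (steps_ctx [L.b,L.a] [] ih) ?_
    exact steps_of_eq (by simp only [wBA]; rw [rep_succ [L.b,L.a] n]; simp)

/-- `(ba)^n = reverse of (ab)^n` -/
lemma revAB (n : ℕ) : wBA n = (wAB n).reverse := by
  induction n with
  | zero => rfl
  | succ n ih =>
    simp only [wAB, wBA] at *
    rw [rep_succ [L.a,L.b] n, rep_succ' [L.b,L.a] n, List.reverse_append, ih]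
    simp

-- ===== Part 4: the matching on the doubled word =====

def LLen (i s t : ℕ) : ℕ := 2*i+4+2*s+4*t
def AA (i t : ℕ) : ℕ := i+2+2*t
def BB (i s t : ℕ) : ℕ := i+2+2*s+2*t

def pa (i s t ℓ : ℕ) : ℕ :=
  if ℓ < i then 2*ℓ+1
  else if ℓ < i+2 then 2*i+2+(ℓ-i)
  else if ℓ < i+2+t then 2*i+4+s+2*(ℓ-(i+2))
  else 2*i+5+s+2*t+2*(ℓ-(i+2+t))

def pb (i s t k : ℕ) : ℕ :=
  if k < i then 2*k
  else if k < i+2 then 2*i+(k-i)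
  else if k < i+2+s then 2*i+4+(k-(i+2))
  else if k < i+2+s+t then 2*i+5+s+2*(k-(i+2+s))
  else if k < i+2+s+2*t then 2*i+4+s+2*t+2*(k-(i+2+s+t))
  else 2*i+4+s+4*t+(k-(i+2+s+2*t))

def letterF (i s t p : ℕ) : L :=
  if p < 2*i then (if p % 2 = 0 then L.b else L.a)
  else if p < 2*i+2 then L.b
  else if p < 2*i+4 then L.a
  else if p < 2*i+4+s then L.b
  else if p < 2*i+4+s+2*t then (if (p-(2*i+4+s)) % 2 = 0 then L.a else L.b)
  else if p < 2*i+4+s+4*t then (if (p-(2*i+4+s+2*t)) % 2 = 0 then L.b else L.a)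
  else L.b

def wrd (i s t : ℕ) : List L :=
  rep [L.b, L.a] i ++ [L.b, L.b, L.a, L.a] ++ rep [L.b] s ++ rep [L.a, L.b] t
    ++ rep [L.b, L.a] t ++ rep [L.b] s

lemma wrd_len (i s t : ℕ) : (wrd i s t).length = LLen i s t := by
  simp only [wrd, LLen, List.length_append, rep_len, List.length_cons, List.length_nil]
  omega

lemma get_rep1 (x : L) (n k : ℕ) (h : k < (rep [x] n).length) : (rep [x] n)[k] = x := by
  have e : rep [x] n = List.replicate n x := rep_single x n
  rw [List.getElem_of_eq e, List.getElem_replicate]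

lemma get_rep2 (x y : L) : ∀ n k (h : k < (rep [x,y] n).length),
    (rep [x,y] n)[k] = if k % 2 = 0 then x else y := by
  intro n
  induction n with
  | zero => intro k h; simp [rep_zero] at h
  | succ n ih =>
    intro k h
    have e : rep [x,y] (n+1) = x :: y :: rep [x,y] n := by rw [rep_succ]; rfl
    have hl : k < (x :: y :: rep [x,y] n).length := by rw [← e]; exact h
    rw [List.getElem_of_eq e]
    match k, hl with
    | 0, _ => simp
    | 1, _ => simp
    | (k+2), hl =>
      have h' : k < (rep [x,y] n).length := by simp at hl; omega
      rw [List.getElem_cons_succ, List.getElem_cons_succ, ih k h']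
      have : (k+2) % 2 = k % 2 := by omega
      rw [this]


lemma get_w (i s t p : ℕ) (h : p < (wrd i s t).length) :
    (wrd i s t)[p] = letterF i s t p := by
  have l1 : (rep [L.b, L.a] i).length = 2*i := by
    simp only [rep_len, List.length_cons, List.length_nil]; omega
  have l2 : (rep [L.b] s).length = s := by
    simp only [rep_len, List.length_cons, List.length_nil]; omega
  have l3 : (rep [L.a, L.b] t).length = 2*t := by
    simp only [rep_len, List.length_cons, List.length_nil]; omega
  have l4 : (rep [L.b, L.a] t).length = 2*t := by
    simp only [rep_len, List.length_cons, List.length_nil]; omega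
  have hL : p < 2*i+4+2*s+4*t := by
    have := wrd_len i s t
    simp only [LLen] at this
    omega
  have ew : wrd i s t = rep [L.b,L.a] i ++ ([L.b,L.b,L.a,L.a] ++ (rep [L.b] s
      ++ (rep [L.a,L.b] t ++ (rep [L.b,L.a] t ++ rep [L.b] s)))) := by
    simp [wrd, List.append_assoc]
  unfold letterF
  rw [List.getElem_of_eq ew, List.getElem_append]
  simp only [l1]
  by_cases c1 : p < 2*i
  · rw [dif_pos c1]
    rw [get_rep2 L.b L.a i p (by rw [l1]; exact c1)]
    rw [if_pos c1]
  · rw [dif_neg c1, List.getElem_append]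
    simp only [List.length_cons, List.length_nil]
    by_cases c2 : p - 2*i < 0+1+1+1+1
    · rw [dif_pos c2]
      have h4 : p - 2*i = 0 ∨ p - 2*i = 1 ∨ p - 2*i = 2 ∨ p - 2*i = 3 := by omega
      rcases h4 with e4 | e4 | e4 | e4 <;> simp only [e4]
      · rw [if_neg c1, if_pos (by omega : p < 2*i+2)]; rfl
      · rw [if_neg c1, if_pos (by omega : p < 2*i+2)]; rfl
      · rw [if_neg c1, if_neg (by omega : ¬ p < 2*i+2), if_pos (by omega : p < 2*i+4)]; rfl
      · rw [if_neg c1, if_neg (by omega : ¬ p < 2*i+2), if_pos (by omega : p < 2*i+4)]; rfl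
    · rw [dif_neg c2, List.getElem_append]
      simp only [l2]
      by_cases c3 : p - 2*i - (0+1+1+1+1) < s
      · rw [dif_pos c3, get_rep1 L.b s _ (by rw [l2]; exact c3)]
        rw [if_neg c1, if_neg (by omega : ¬ p < 2*i+2), if_neg (by omega : ¬ p < 2*i+4),
          if_pos (by omega : p < 2*i+4+s)]
      · rw [dif_neg c3, List.getElem_append]
        simp only [l3]
        by_cases c4 : p - 2*i - (0+1+1+1+1) - s < 2*t
        · rw [dif_pos c4, get_rep2 L.a L.b t _ (by rw [l3]; exact c4)]
          rw [if_neg c1, if_neg (by omega : ¬ p < 2*i+2), if_neg (by omega : ¬ p < 2*i+4),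
            if_neg (by omega : ¬ p < 2*i+4+s), if_pos (by omega : p < 2*i+4+s+2*t)]
          have e : p - 2*i - (0+1+1+1+1) - s = p - (2*i+4+s) := by omega
          rw [e]
        · rw [dif_neg c4, List.getElem_append]
          simp only [l4]
          by_cases c5 : p - 2*i - (0+1+1+1+1) - s - 2*t < 2*t
          · rw [dif_pos c5, get_rep2 L.b L.a t _ (by rw [l4]; exact c5)]
            rw [if_neg c1, if_neg (by omega : ¬ p < 2*i+2), if_neg (by omega : ¬ p < 2*i+4),
              if_neg (by omega : ¬ p < 2*i+4+s), if_neg (by omega : ¬ p < 2*i+4+s+2*t),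
              if_pos (by omega : p < 2*i+4+s+4*t)]
            have e : p - 2*i - (0+1+1+1+1) - s - 2*t = p - (2*i+4+s+2*t) := by omega
            rw [e]
          · rw [dif_neg c5, get_rep1 L.b s _ (by rw [l2]; omega)]
            rw [if_neg c1, if_neg (by omega : ¬ p < 2*i+2), if_neg (by omega : ¬ p < 2*i+4),
              if_neg (by omega : ¬ p < 2*i+4+s), if_neg (by omega : ¬ p < 2*i+4+s+2*t),
              if_neg (by omega : ¬ p < 2*i+4+s+4*t)]

def isaP (i s t p : ℕ) : Prop :=
  (p < 2*i ∧ p % 2 = 1) ∨ (2*i+2 ≤ p ∧ p < 2*i+4) ∨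
  (2*i+4+s ≤ p ∧ p < 2*i+4+s+2*t ∧ (p - (2*i+4+s)) % 2 = 0) ∨
  (2*i+4+s+2*t ≤ p ∧ p < 2*i+4+s+4*t ∧ (p - (2*i+4+s+2*t)) % 2 = 1)

def raf (i s t p : ℕ) : ℕ :=
  if p < 2*i then p/2
  else if p < 2*i+4 then i + (p - (2*i+2))
  else if p < 2*i+4+s+2*t then i+2 + (p - (2*i+4+s))/2
  else i+2+t + (p - (2*i+4+s+2*t))/2

def rbf (i s t p : ℕ) : ℕ :=
  if p < 2*i then p/2
  else if p < 2*i+2 then i + (p - 2*i)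
  else if p < 2*i+4+s then i+2 + (p - (2*i+4))
  else if p < 2*i+4+s+2*t then i+2+s + (p - (2*i+4+s))/2
  else if p < 2*i+4+s+4*t then i+2+s+t + (p - (2*i+4+s+2*t))/2
  else i+2+s+2*t + (p - (2*i+4+s+4*t))

open Classical in
noncomputable def tauF (i s t p : ℕ) : ℕ :=
  if isaP i s t p then pa i s t (i+1+2*t - raf i s t p)
  else pb i s t (i+1+2*s+2*t - rbf i s t p)

lemma pa_spec (i s t : ℕ) {l : ℕ} (h : l < AA i t) :
    (l < i ∧ pa i s t l = 2*l+1) ∨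
    (i ≤ l ∧ l < i+2 ∧ pa i s t l = 2*i+2+(l-i)) ∨
    (i+2 ≤ l ∧ l < i+2+t ∧ pa i s t l = 2*i+4+s+2*(l-(i+2))) ∨
    (i+2+t ≤ l ∧ l < i+2+2*t ∧ pa i s t l = 2*i+5+s+2*t+2*(l-(i+2+t))) := by
  unfold pa AA at *; split_ifs <;> omega

lemma pb_spec (i s t : ℕ) {k : ℕ} (h : k < BB i s t) :
    (k < i ∧ pb i s t k = 2*k) ∨
    (i ≤ k ∧ k < i+2 ∧ pb i s t k = 2*i+(k-i)) ∨
    (i+2 ≤ k ∧ k < i+2+s ∧ pb i s t k = 2*i+4+(k-(i+2))) ∨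
    (i+2+s ≤ k ∧ k < i+2+s+t ∧ pb i s t k = 2*i+5+s+2*(k-(i+2+s))) ∨
    (i+2+s+t ≤ k ∧ k < i+2+s+2*t ∧ pb i s t k = 2*i+4+s+2*t+2*(k-(i+2+s+t))) ∨
    (i+2+s+2*t ≤ k ∧ k < i+2+2*s+2*t ∧ pb i s t k = 2*i+4+s+4*t+(k-(i+2+s+2*t))) := by
  unfold pb BB at *; split_ifs <;> omega

lemma pa_lt (i s t : ℕ) {l : ℕ} (h : l < AA i t) : pa i s t l < LLen i s t := by
  have sp := pa_spec i s t h
  unfold AA at h; unfold LLen; omega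

lemma pb_lt (i s t : ℕ) {k : ℕ} (h : k < BB i s t) : pb i s t k < LLen i s t := by
  have sp := pb_spec i s t h
  unfold BB at h; unfold LLen; omega

lemma pa_mono (i s t : ℕ) {l l' : ℕ} (h : l < l') (h' : l' < AA i t) :
    pa i s t l < pa i s t l' := by
  have sp1 := pa_spec i s t (show l < AA i t by unfold AA at *; omega)
  have sp2 := pa_spec i s t h'
  omega

lemma pb_mono (i s t : ℕ) {k k' : ℕ} (h : k < k') (h' : k' < BB i s t) :
    pb i s t k < pb i s t k' := by
  have sp1 := pb_spec i s t (show k < BB i s t by unfold BB at *; omega)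
  have sp2 := pb_spec i s t h'
  omega

set_option maxHeartbeats 2000000 in
lemma F6 (i s t : ℕ) (hs : 2 ≤ s) {k l : ℕ} (hk : k < BB i s t) (hl : l < AA i t)
    (hlt : pb i s t k < pa i s t l) :
    pa i s t (i+1+2*t - l) < pb i s t (i+1+2*s+2*t - k) := by
  have sp1 := pb_spec i s t hk
  have sp2 := pa_spec i s t hl
  have sp3 := pa_spec i s t (show i+1+2*t - l < AA i t by unfold AA at *; omega)
  have sp4 := pb_spec i s t (show i+1+2*s+2*t - k < BB i s t by unfold BB at *; omega)
  unfold AA at hl; unfold BB at hk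
  omega

set_option maxHeartbeats 2000000 in
lemma F1 (i s t : ℕ) {l : ℕ} (h : l < AA i t) : letterF i s t (pa i s t l) = L.a := by
  have ha := h
  unfold AA at ha
  rcases pa_spec i s t h with ⟨h1, he⟩ | ⟨h1, h2, he⟩ | ⟨h1, h2, he⟩ | ⟨h1, h2, he⟩ <;>
    rw [he] <;> unfold letterF <;> split_ifs <;> first | rfl | omega

set_option maxHeartbeats 2000000 in
lemma F2 (i s t : ℕ) {k : ℕ} (h : k < BB i s t) : letterF i s t (pb i s t k) = L.b := by
  have hb := h
  unfold BB at hb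
  rcases pb_spec i s t h with ⟨h1, he⟩ | ⟨h1, h2, he⟩ | ⟨h1, h2, he⟩ | ⟨h1, h2, he⟩
    | ⟨h1, h2, he⟩ | ⟨h1, h2, he⟩ <;>
    rw [he] <;> unfold letterF <;> split_ifs <;> first | rfl | omega

set_option maxHeartbeats 2000000 in
lemma F4 (i s t : ℕ) {p : ℕ} (hp : p < LLen i s t) :
    (∃ l, l < AA i t ∧ pa i s t l = p) ∨ (∃ k, k < BB i s t ∧ pb i s t k = p) := by
  unfold LLen at hp
  rcases Nat.lt_or_ge p (2*i) with h1 | h1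
  · rcases Nat.even_or_odd p with ⟨m, hm⟩ | ⟨m, hm⟩
    · exact Or.inr ⟨m, by unfold BB; omega, by unfold pb; split_ifs <;> omega⟩
    · exact Or.inl ⟨m, by unfold AA; omega, by unfold pa; split_ifs <;> omega⟩
  rcases Nat.lt_or_ge p (2*i+2) with h2 | h2
  · exact Or.inr ⟨i + (p - 2*i), by unfold BB; omega, by unfold pb; split_ifs <;> omega⟩
  rcases Nat.lt_or_ge p (2*i+4) with h3 | h3
  · exact Or.inl ⟨i + (p - (2*i+2)), by unfold AA; omega, by unfold pa; split_ifs <;> omega⟩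
  rcases Nat.lt_or_ge p (2*i+4+s) with h4 | h4
  · exact Or.inr ⟨i+2 + (p - (2*i+4)), by unfold BB; omega, by unfold pb; split_ifs <;> omega⟩
  rcases Nat.lt_or_ge p (2*i+4+s+2*t) with h5 | h5
  · rcases Nat.even_or_odd (p - (2*i+4+s)) with ⟨m, hm⟩ | ⟨m, hm⟩
    · exact Or.inl ⟨i+2+m, by unfold AA; omega, by unfold pa; split_ifs <;> omega⟩
    · exact Or.inr ⟨i+2+s+m, by unfold BB; omega, by unfold pb; split_ifs <;> omega⟩
  rcases Nat.lt_or_ge p (2*i+4+s+4*t) with h6 | h6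
  · rcases Nat.even_or_odd (p - (2*i+4+s+2*t)) with ⟨m, hm⟩ | ⟨m, hm⟩
    · exact Or.inr ⟨i+2+s+t+m, by unfold BB; omega, by unfold pb; split_ifs <;> omega⟩
    · exact Or.inl ⟨i+2+t+m, by unfold AA; omega, by unfold pa; split_ifs <;> omega⟩
  · exact Or.inr ⟨i+2+s+2*t + (p - (2*i+4+s+4*t)), by unfold BB; omega,
      by unfold pb; split_ifs <;> omega⟩

set_option maxHeartbeats 2000000 in
lemma K1a (i s t : ℕ) {l : ℕ} (h : l < AA i t) : isaP i s t (pa i s t l) := by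
  have sp := pa_spec i s t h
  unfold AA at h; unfold isaP
  omega

set_option maxHeartbeats 2000000 in
lemma K1b (i s t : ℕ) {l : ℕ} (h : l < AA i t) : raf i s t (pa i s t l) = l := by
  have sp := pa_spec i s t h
  unfold AA at h; unfold raf
  split_ifs <;> omega

set_option maxHeartbeats 2000000 in
lemma K2a (i s t : ℕ) {k : ℕ} (h : k < BB i s t) : ¬ isaP i s t (pb i s t k) := by
  have sp := pb_spec i s t h
  unfold BB at h; unfold isaP
  omega

set_option maxHeartbeats 2000000 in
lemma K2b (i s t : ℕ) {k : ℕ} (h : k < BB i s t) : rbf i s t (pb i s t k) = k := by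
  have sp := pb_spec i s t h
  unfold BB at h; unfold rbf
  split_ifs <;> omega

lemma tau_pa (i s t : ℕ) {l : ℕ} (h : l < AA i t) :
    tauF i s t (pa i s t l) = pa i s t (i+1+2*t - l) := by
  unfold tauF
  rw [if_pos (K1a i s t h), K1b i s t h]

lemma tau_pb (i s t : ℕ) {k : ℕ} (h : k < BB i s t) :
    tauF i s t (pb i s t k) = pb i s t (i+1+2*s+2*t - k) := by
  unfold tauF
  rw [if_neg (K2a i s t h), K2b i s t h]

lemma TB (i s t : ℕ) {p : ℕ} (hp : p < LLen i s t) : tauF i s t p < LLen i s t := by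
  rcases F4 i s t hp with ⟨l, hl, rfl⟩ | ⟨k, hk, rfl⟩
  · rw [tau_pa i s t hl]
    exact pa_lt i s t (by unfold AA at *; omega)
  · rw [tau_pb i s t hk]
    exact pb_lt i s t (by unfold BB at *; omega)

lemma TINV (i s t : ℕ) {p : ℕ} (hp : p < LLen i s t) : tauF i s t (tauF i s t p) = p := by
  rcases F4 i s t hp with ⟨l, hl, rfl⟩ | ⟨k, hk, rfl⟩
  · rw [tau_pa i s t hl, tau_pa i s t (by unfold AA at *; omega)]
    congr 1
    unfold AA at hl; omega
  · rw [tau_pb i s t hk, tau_pb i s t (by unfold BB at *; omega)]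
    congr 1
    unfold BB at hk; omega

lemma TLET (i s t : ℕ) {p : ℕ} (hp : p < LLen i s t) :
    letterF i s t (tauF i s t p) = letterF i s t p := by
  rcases F4 i s t hp with ⟨l, hl, rfl⟩ | ⟨k, hk, rfl⟩
  · rw [tau_pa i s t hl, F1 i s t hl, F1 i s t (by unfold AA at *; omega)]
  · rw [tau_pb i s t hk, F2 i s t hk, F2 i s t (by unfold BB at *; omega)]

lemma bar_bar (c : L) : bar (bar c) = c := by cases c <;> rfl

lemma getElem_barw (u : List L) (n : ℕ) (h : n < (barw u).length) (h2 : n < u.length) :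
    (barw u)[n]'h = bar (u[n]'h2) := List.getElem_map bar

noncomputable def mval (i s t p : ℕ) : ℕ :=
  if p < LLen i s t then LLen i s t + tauF i s t p else tauF i s t (p - LLen i s t)

lemma mval_pos (i s t : ℕ) {p : ℕ} (h : p < LLen i s t) :
    mval i s t p = LLen i s t + tauF i s t p := if_pos h

lemma mval_neg (i s t : ℕ) {p : ℕ} (h : ¬ p < LLen i s t) :
    mval i s t p = tauF i s t (p - LLen i s t) := if_neg h

lemma mval_lt (i s t : ℕ) {p : ℕ} (h : p < 2 * LLen i s t) :
    mval i s t p < 2 * LLen i s t := by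
  by_cases hc : p < LLen i s t
  · rw [mval_pos i s t hc]
    have := TB i s t hc
    omega
  · rw [mval_neg i s t hc]
    have := TB i s t (show p - LLen i s t < LLen i s t by omega)
    omega

lemma mval_inv (i s t : ℕ) {p : ℕ} (h : p < 2 * LLen i s t) :
    mval i s t (mval i s t p) = p := by
  by_cases hc : p < LLen i s t
  · rw [mval_pos i s t hc]
    have htb := TB i s t hc
    rw [mval_neg i s t (by omega), show LLen i s t + tauF i s t p - LLen i s t
      = tauF i s t p from by omega]
    exact TINV i s t hc
  · have h2 : p - LLen i s t < LLen i s t := by omega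
    have htb := TB i s t h2
    rw [mval_neg i s t hc, mval_pos i s t htb, TINV i s t h2]
    omega

lemma mval_ne (i s t : ℕ) {p : ℕ} (h : p < 2 * LLen i s t) : mval i s t p ≠ p := by
  by_cases hc : p < LLen i s t
  · rw [mval_pos i s t hc]; omega
  · rw [mval_neg i s t hc]
    have := TB i s t (show p - LLen i s t < LLen i s t by omega)
    omega

set_option maxHeartbeats 1000000 in
lemma good (i s t : ℕ) (hs : 2 ≤ s) : GoodWord (wrd i s t ++ barw (wrd i s t)) := by
  classical
  set D := wrd i s t ++ barw (wrd i s t) with hD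
  have hwlen : (wrd i s t).length = LLen i s t := wrd_len i s t
  have hDlen : D.length = 2 * LLen i s t := by
    rw [hD]
    simp only [List.length_append, barw, List.length_map, hwlen]
    omega
  have hcg : ∀ (p1 p2 : ℕ) (h1 : p1 < D.length) (h2 : p2 < D.length), p1 = p2 →
      D[p1]'h1 = D[p2]'h2 := by
    intro p1 p2 h1 h2 he
    subst he; rfl
  have getD1 : ∀ (p : ℕ) (hp : p < LLen i s t) (hq : p < D.length),
      D[p]'hq = letterF i s t p := by
    intro p hp hq
    rw [List.getElem_of_eq hD hq, List.getElem_append_left (by rw [hwlen]; exact hp)]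
    exact get_w i s t p (by rw [hwlen]; exact hp)
  have getD2 : ∀ (p : ℕ) (hp1 : LLen i s t ≤ p) (hq : p < D.length),
      D[p]'hq = bar (letterF i s t (p - LLen i s t)) := by
    intro p hp1 hq
    have hp2 : p < 2 * LLen i s t := by omega
    have hb1 : (wrd i s t).length ≤ p := by rw [hwlen]; exact hp1
    rw [List.getElem_of_eq hD hq, List.getElem_append_right hb1,
      getElem_barw _ _ _ (by rw [hwlen]; omega),
      get_w i s t _ (by rw [hwlen]; omega), hwlen]
  have hbm : ∀ (q : Fin D.length), mval i s t q.val < D.length := by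
    intro q
    have hq := q.isLt
    have := mval_lt i s t (show q.val < 2 * LLen i s t by omega)
    omega
  refine ⟨⟨fun q => ⟨mval i s t q.val, hbm q⟩, ?_, ?_, ?_⟩, ?_⟩
  · -- invol
    intro q
    apply Fin.ext
    show mval i s t (mval i s t q.val) = q.val
    exact mval_inv i s t (by have := q.isLt; omega)
  · -- nofix
    intro q heq
    have hv : mval i s t q.val = q.val := congrArg Fin.val heq
    exact mval_ne i s t (by have := q.isLt; omega) hv
  · -- compat
    intro q
    rw [List.get_eq_getElem, List.get_eq_getElem]
    show D[mval i s t q.val]'(hbm q) = bar (D[q.val]'q.isLt)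
    have hq : q.val < 2 * LLen i s t := by have := q.isLt; omega
    by_cases hc : q.val < LLen i s t
    · have hbnd : LLen i s t + tauF i s t q.val < D.length := by
        have := TB i s t hc; omega
      rw [hcg _ _ _ hbnd (mval_pos i s t hc), getD2 _ (by omega) hbnd,
        show LLen i s t + tauF i s t q.val - LLen i s t = tauF i s t q.val from by omega,
        TLET i s t hc, getD1 q.val hc q.isLt]
    · have h2 : q.val - LLen i s t < LLen i s t := by omega
      have htb := TB i s t h2
      have hbnd : tauF i s t (q.val - LLen i s t) < D.length := by omega
      rw [hcg _ _ _ hbnd (mval_neg i s t hc), getD1 _ htb hbnd, TLET i s t h2,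
        getD2 q.val (by omega) q.isLt, bar_bar]
  · -- CrossOK
    intro I J I' J' h1 h2 h3 hm1 hm2
    have h1' : I.val < J.val := h1
    have h2' : J.val < I'.val := h2
    have h3' : I'.val < J'.val := h3
    have hv1 : mval i s t I.val = I'.val := congrArg Fin.val hm1
    have hv2 : mval i s t J.val = J'.val := congrArg Fin.val hm2
    have hIq : I.val < 2 * LLen i s t := by have := I.isLt; omega
    have hJq : J.val < 2 * LLen i s t := by have := J.isLt; omega
    have hJ'q : J'.val < 2 * LLen i s t := by have := J'.isLt; omega
    have hIlt : I.val < LLen i s t := by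
      by_contra hc
      rw [mval_neg i s t hc] at hv1
      have := TB i s t (show I.val - LLen i s t < LLen i s t by omega)
      omega
    have hJlt : J.val < LLen i s t := by
      by_contra hc
      rw [mval_neg i s t hc] at hv2
      have := TB i s t (show J.val - LLen i s t < LLen i s t by omega)
      omega
    rw [mval_pos i s t hIlt] at hv1
    rw [mval_pos i s t hJlt] at hv2
    have htau : tauF i s t I.val < tauF i s t J.val := by omega
    rcases F4 i s t hIlt with ⟨l1, hl1, hpe1⟩ | ⟨k1, hk1, hpe1⟩ <;>
      rcases F4 i s t hJlt with ⟨l2, hl2, hpe2⟩ | ⟨k2, hk2, hpe2⟩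
    · -- (a, a) : impossible
      exfalso
      have e1 : tauF i s t I.val = pa i s t (i+1+2*t - l1) := by
        rw [← hpe1, tau_pa i s t hl1]
      have e2 : tauF i s t J.val = pa i s t (i+1+2*t - l2) := by
        rw [← hpe2, tau_pa i s t hl2]
      have hltl : l1 < l2 := by
        rcases lt_trichotomy l1 l2 with h | h | h
        · exact h
        · exfalso; rw [h] at hpe1; omega
        · exfalso; have := pa_mono i s t h hl1; omega
      have hmono := pa_mono i s t (show i+1+2*t - l2 < i+1+2*t - l1 by
        unfold AA at hl2; omega) (show i+1+2*t - l1 < AA i t by unfold AA at *; omega)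
      omega
    · -- (a, b) : the good crossing
      have hbnd1 : LLen i s t + tauF i s t I.val < D.length := by
        have := TB i s t hIlt; omega
      have hbnd2 : LLen i s t + tauF i s t J.val < D.length := by
        have := TB i s t hJlt; omega
      have gI : D.get I = L.a := by
        rw [List.get_eq_getElem, getD1 I.val hIlt I.isLt, ← hpe1, F1 i s t hl1]
      have gJ : D.get J = L.b := by
        rw [List.get_eq_getElem, getD1 J.val hJlt J.isLt, ← hpe2, F2 i s t hk2]
      have gI' : D.get I' = L.A := by
        rw [List.get_eq_getElem, hcg I'.val _ I'.isLt hbnd1 hv1.symm, getD2 _ (by omega) _,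
          show LLen i s t + tauF i s t I.val - LLen i s t = tauF i s t I.val from by omega,
          TLET i s t hIlt, ← hpe1, F1 i s t hl1]
        rfl
      have gJ' : D.get J' = L.B := by
        rw [List.get_eq_getElem, hcg J'.val _ J'.isLt hbnd2 hv2.symm, getD2 _ (by omega) _,
          show LLen i s t + tauF i s t J.val - LLen i s t = tauF i s t J.val from by omega,
          TLET i s t hJlt, ← hpe2, F2 i s t hk2]
        rfl
      exact Or.inl ⟨gI, gJ, gI', gJ'⟩
    · -- (b, a) : impossible by F6
      exfalso
      have e1 : tauF i s t I.val = pb i s t (i+1+2*s+2*t - k1) := by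
        rw [← hpe1, tau_pb i s t hk1]
      have e2 : tauF i s t J.val = pa i s t (i+1+2*t - l2) := by
        rw [← hpe2, tau_pa i s t hl2]
      have := F6 i s t hs hk1 hl2 (by omega)
      omega
    · -- (b, b) : impossible
      exfalso
      have e1 : tauF i s t I.val = pb i s t (i+1+2*s+2*t - k1) := by
        rw [← hpe1, tau_pb i s t hk1]
      have e2 : tauF i s t J.val = pb i s t (i+1+2*s+2*t - k2) := by
        rw [← hpe2, tau_pb i s t hk2]
      have hltl : k1 < k2 := by
        rcases lt_trichotomy k1 k2 with h | h | h
        · exact h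
        · exfalso; rw [h] at hpe1; omega
        · exfalso; have := pb_mono i s t h hk1; omega
      have hmono := pb_mono i s t (show i+1+2*s+2*t - k2 < i+1+2*s+2*t - k1 by
        unfold BB at hk2; omega) (show i+1+2*s+2*t - k1 < BB i s t by unfold BB at *; omega)
      omega

/-- Case 2(a), `s ≥ 2`: the word `(ba)^i · bbaa · b^s(ab)^t(ba)^t b^s` rewrites under
`⇒*` to `(ab)^{i+2}`, which rewrites by `→*` to its reversal `(ba)^{i+2}`; hence its
doubled circular word satisfies the crossing condition. -/
theorem subrosa_case2a (i s t : ℕ) (hs : 2 ≤ s) :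
    FSteps (rep [L.b, L.a] i ++ [L.b, L.b, L.a, L.a] ++ rep [L.b] s ++ rep [L.a, L.b] t
          ++ rep [L.b, L.a] t ++ rep [L.b] s)
        (rep [L.a, L.b] (i + 2)) ∧
    Steps (rep [L.a, L.b] (i + 2)) (rep [L.b, L.a] (i + 2)) ∧
    rep [L.b, L.a] (i + 2) = (rep [L.a, L.b] (i + 2)).reverse ∧
    GoodWord ((rep [L.b, L.a] i ++ [L.b, L.b, L.a, L.a] ++ rep [L.b] s ++ rep [L.a, L.b] t
          ++ rep [L.b, L.a] t ++ rep [L.b] s)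
      ++ barw (rep [L.b, L.a] i ++ [L.b, L.b, L.a, L.a] ++ rep [L.b] s ++ rep [L.a, L.b] t
          ++ rep [L.b, L.a] t ++ rep [L.b] s)) := by
  obtain ⟨σ, rfl⟩ : ∃ σ, s = σ + 2 := ⟨s - 2, by omega⟩
  refine ⟨?_, ?_, ?_, ?_⟩
  · exact main1 σ i t
  · exact ABtoBA (i + 2)
  · exact revAB (i + 2)
  · exact good i (σ + 2) t (by omega)
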